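/- For every A ∈ M_n(ℂ), the 2n×2n block matrix [[|A*|, A], [A*, |A|]] is positive semidefinite. -/

import Mathlib

/-!
With `H = [[0, A], [A*, 0]]` self-adjoint, `H*H = diag(AA*, A*A)`, so uniqueness of positive square
roots gives `|H| = diag(|A*|, |A|)`. The block matrix is therefore `|H| + H = 2 H⁺ ≥ 0`.
-/

open Matrix
open scoped ComplexOrder

/-- The positive semidefinite square root of a positive semidefinite matrix
(the definition removed from Mathlib, restored with its old meaning). -/
noncomputable def Matrix.PosSemidef.sqrt {n : Type*} [Fintype n] [DecidableEq n]
    {A : Matrix n n ℂ} (hA : A.PosSemidef) : Matrix n n ℂ :=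
  hA.1.eigenvectorUnitary.1 * diagonal ((↑) ∘ (√·) ∘ hA.1.eigenvalues) *
  (star hA.1.eigenvectorUnitary : Matrix n n ℂ)

theorem Matrix.PosSemidef.posSemidef_sqrt {n : Type*} [Fintype n] [DecidableEq n]
    {A : Matrix n n ℂ} (hA : A.PosSemidef) : PosSemidef hA.sqrt := by
  apply PosSemidef.mul_mul_conjTranspose_same
  refine posSemidef_diagonal_iff.mpr fun i ↦ ?_
  simp only [Function.comp_apply]
  exact_mod_cast Real.sqrt_nonneg _

/-- The usual modulus `|Z| = (Zᴴ Z)^(1/2)` (positive semidefinite square root). -/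
noncomputable def mAbs {k : Type*} [Fintype k] [DecidableEq k]
    (Z : Matrix k k ℂ) : Matrix k k ℂ :=
  (Matrix.posSemidef_conjTranspose_mul_self Z).sqrt

lemma mAbs_posSemidef {k : Type*} [Fintype k] [DecidableEq k]
    (Z : Matrix k k ℂ) : (mAbs Z).PosSemidef :=
  Matrix.PosSemidef.posSemidef_sqrt _

lemma psd_half_smul {k : Type*} [Fintype k] [DecidableEq k]
    {M : Matrix k k ℂ} (h : M.PosSemidef) :
    ((2:ℂ)⁻¹ • M).PosSemidef := by
  constructor
  · unfold Matrix.IsHermitian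
    rw [conjTranspose_smul, h.1]
    norm_num
  · exact (h.smul (show (0:ℂ) ≤ (2:ℂ)⁻¹ by simp [Complex.le_def])).2

/-- The arithmetic symmetric modulus `(|Z| + |Z*|)/2`. -/
noncomputable def symMod {k : Type*} [Fintype k] [DecidableEq k]
    (Z : Matrix k k ℂ) : Matrix k k ℂ :=
  (2:ℂ)⁻¹ • (mAbs Z + mAbs Zᴴ)

lemma symMod_posSemidef {k : Type*} [Fintype k] [DecidableEq k]
    (Z : Matrix k k ℂ) : (symMod Z).PosSemidef :=
  psd_half_smul ((mAbs_posSemidef Z).add (mAbs_posSemidef Zᴴ))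

lemma qsym_arg_psd {k : Type*} [Fintype k] [DecidableEq k]
    (Z : Matrix k k ℂ) :
    ((2:ℂ)⁻¹ • (mAbs Z ^ 2 + mAbs Zᴴ ^ 2)).PosSemidef :=
  psd_half_smul (((mAbs_posSemidef Z).pow 2).add ((mAbs_posSemidef Zᴴ).pow 2))

/-- The quadratic symmetric modulus `((|Z|² + |Z*|²)/2)^(1/2)`. -/
noncomputable def qsymMod {k : Type*} [Fintype k] [DecidableEq k]
    (Z : Matrix k k ℂ) : Matrix k k ℂ :=
  (qsym_arg_psd Z).sqrt

lemma qsymMod_posSemidef {k : Type*} [Fintype k] [DecidableEq k]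
    (Z : Matrix k k ℂ) : (qsymMod Z).PosSemidef :=
  Matrix.PosSemidef.posSemidef_sqrt _

/-- The Schatten `p`-norm, as the `ℓ^p` norm of the singular values
(the eigenvalues of `|X|`). -/
noncomputable def schatten {k : Type*} [Fintype k] [DecidableEq k]
    (p : ℝ) (X : Matrix k k ℂ) : ℝ :=
  (∑ i, ((mAbs_posSemidef X).1.eigenvalues i) ^ p) ^ (1/p)

/-- The operator norm: the largest singular value. -/
noncomputable def opN {k : Type*} [Fintype k] [DecidableEq k]
    (X : Matrix k k ℂ) : ℝ :=
  ⨆ i, (mAbs_posSemidef X).1.eigenvalues i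

/-- The Frobenius (Schatten-2) norm. -/
noncomputable def frob {k : Type*} [Fintype k] [DecidableEq k]
    (X : Matrix k k ℂ) : ℝ :=
  Real.sqrt ((Xᴴ * X).trace.re)

open scoped MatrixOrder

section RCLike

variable {𝕜 : Type*} [RCLike 𝕜] {m n : Type*} [Fintype m] [Fintype n] [DecidableEq m] [DecidableEq n]

theorem Matrix.PosSemidef.fromBlocks_zero {P : Matrix m m 𝕜} {Q : Matrix n n 𝕜}
    (hP : P.PosSemidef) (hQ : Q.PosSemidef) : (fromBlocks P 0 0 Q).PosSemidef := by
  set R := fromBlocks (CFC.sqrt P) 0 0 (CFC.sqrt Q)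
  have hR : fromBlocks P 0 0 Q = Rᴴ * R := by
    rw [fromBlocks_conjTranspose, fromBlocks_multiply, (CFC.sqrt_nonneg P).posSemidef.1.eq,
      (CFC.sqrt_nonneg Q).posSemidef.1.eq, CFC.sqrt_mul_sqrt_self P hP.nonneg,
      CFC.sqrt_mul_sqrt_self Q hQ.nonneg]
    simp
  exact hR ▸ posSemidef_conjTranspose_mul_self R

theorem CFC.abs_fromBlocks_offDiag (A : Matrix n n 𝕜) :
    CFC.abs (fromBlocks 0 A Aᴴ 0) = fromBlocks (CFC.abs Aᴴ) 0 0 (CFC.abs A) := by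
  refine CFC.sqrt_unique ?_
    ((CFC.abs_nonneg _).posSemidef.fromBlocks_zero (CFC.abs_nonneg _).posSemidef).nonneg
  simp [fromBlocks_multiply, CFC.abs_mul_abs, star_eq_conjTranspose, fromBlocks_conjTranspose]

end RCLike

theorem Matrix.PosSemidef.sqrt_eq_cfcSqrt {n : Type*} [Fintype n] [DecidableEq n]
    {A : Matrix n n ℂ} (hA : A.PosSemidef) : hA.sqrt = CFC.sqrt A := by
  rw [CFC.sqrt_eq_real_sqrt A hA.nonneg, cfcₙ_eq_cfc, hA.1.cfc_eq]
  simp [IsHermitian.cfc, PosSemidef.sqrt, Function.comp_def]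

theorem mAbs_eq_cfcAbs {k : Type*} [Fintype k] [DecidableEq k] (Z : Matrix k k ℂ) :
    mAbs Z = CFC.abs Z :=
  (posSemidef_conjTranspose_mul_self Z).sqrt_eq_cfcSqrt

/-- The block matrix `[[|A*|, A], [A*, |A|]]` is positive semidefinite. -/
theorem stmt4 (n : ℕ) (A : Matrix (Fin n) (Fin n) ℂ) :
    (Matrix.fromBlocks (mAbs Aᴴ) A Aᴴ (mAbs A)).PosSemidef := by
  set H := fromBlocks 0 A Aᴴ 0
  have hH : IsSelfAdjoint H := (isHermitian_zero.fromBlocks rfl isHermitian_zero).isSelfAdjoint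
  have hsplit : fromBlocks (mAbs Aᴴ) A Aᴴ (mAbs A) = CFC.abs H + H := by
    rw [CFC.abs_fromBlocks_offDiag, mAbs_eq_cfcAbs, mAbs_eq_cfcAbs, fromBlocks_add]
    simp
  rw [hsplit, CFC.abs_add_self H, ← nonneg_iff_posSemidef]
  exact smul_nonneg zero_le_two (CFC.posPart_nonneg H)
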